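/- For every k ≥ 1 and every universal co-Büchi k-register automaton A over the infinite data-domain D: the product automaton A_B@V_k has a rejected Boolean word (a word over 2^(P ∪ G_i ∪ G_o ∪ Asgn) on which some run of A_B@V_k visits the co-Büchi set infinitely often) if and only if A has a rejected data-word (a word over 2^P × D × D on which some data-path of A visits F infinitely often). -/

import Mathlib

/-!
The verifier `V_k` tracks exactly which registers hold equal values: along a data-path, the
kernels of the successive register valuations form a run of `V_k` on the encoded guards and
assignments, and `V_k` is deterministic. Conversely, a guard that respects the current
partition (constant on blocks, true on at most one block) is the equality pattern of some
data value: the common value of the marked block, or, since `D` is infinite and there are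
finitely many registers, a value held by no register. Choosing such values step by step lifts
any path of `A_B @ V_k` to a data-path of `A` through the same states, keeping the invariant
that the verifier's partition is the kernel of the register valuation.
-/

/-- A register word automaton over Boolean signals `P`, data-domain `D`, states `Q`,
and registers indexed by `R` (for a `k`-register automaton, `R = Fin k`).
The transition function reads a Boolean letter, an input-guard and an output-guard
(comparisons of the data-values of `i` resp. `o` with the registers) and yields
a set of (assignment, successor-state) pairs. -/
structure RegAutomaton (P D Q R : Type) where
  d0 : D
  q0 : Q
  F : Set Q
  tr : Q → (P → Bool) → (R → Bool) → (R → Bool) → Set ((R → Bool) × Q)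

/-- A data-path of a register automaton on the letter sequence `(l j, di j, dout j)`. -/
structure DataPath {P D Q R : Type} [DecidableEq D] (A : RegAutomaton P D Q R)
    (l : ℕ → P → Bool) (di dout : ℕ → D) where
  st : ℕ → Q
  regs : ℕ → R → D
  asgn : ℕ → R → Bool
  init_st : st 0 = A.q0
  init_regs : ∀ n, regs 0 n = A.d0
  step : ∀ j, (asgn j, st (j + 1)) ∈
    A.tr (st j) (l j) (fun n => decide (di j = regs j n)) (fun n => decide (dout j = regs j n))
  update : ∀ j n, regs (j + 1) n = if asgn j n then di j else regs j n

/-- The transition relation of the verifier `V_k`: its states are partitions of the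
register set (modelled as setoids); the guard letter must respect the current partition,
and the successor partition is determined by the assignment letter. -/
def VTrans {R : Type} (pa pa' : Setoid R) (gi go a : R → Bool) : Prop :=
  (∀ m n : R, pa.r m n → gi m = gi n ∧ go m = go n) ∧
  (∀ m n : R, ¬ pa.r m n → ¬(gi m = true ∧ gi n = true) ∧ ¬(go m = true ∧ go n = true)) ∧
  (∀ m n : R, pa'.r m n ↔
    ((a m = true ∧ a n = true) ∨ (a m = false ∧ a n = true ∧ gi m = true) ∨
     (a m = true ∧ a n = false ∧ gi n = true) ∨ (a m = false ∧ a n = false ∧ pa.r m n)))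

/-- A Boolean path of the product automaton `A_B @ V_k`: a path of the Boolean
associate of `A` together with the (deterministic) partition component of the
verifier, starting in the one-block partition `⊤`. -/
structure BoolPathV {P D Q R : Type} (A : RegAutomaton P D Q R) where
  st : ℕ → Q
  part : ℕ → Setoid R
  lP : ℕ → P → Bool
  gi : ℕ → R → Bool
  go : ℕ → R → Bool
  asgn : ℕ → R → Bool
  init_st : st 0 = A.q0
  init_part : part 0 = ⊤
  stepA : ∀ j, (asgn j, st (j + 1)) ∈ A.tr (st j) (lP j) (gi j) (go j)
  stepV : ∀ j, VTrans (part j) (part (j + 1)) (gi j) (go j) (asgn j)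

/-- A data-path of `A` corresponds to a Boolean path of `A_B @ V_k` iff, projecting away
the partition component, they visit the same states, carry the same `2^P`-letters, and at
every step the guard and assignment signals encode the guards and assignment of the
data-path. -/
def CorrespondsV {P D Q R : Type} [DecidableEq D] {A : RegAutomaton P D Q R}
    {l : ℕ → P → Bool} {di dout : ℕ → D}
    (dp : DataPath A l di dout) (bp : BoolPathV A) : Prop :=
  (∀ j, bp.st j = dp.st j) ∧ (∀ j, bp.lP j = l j) ∧
  (∀ j, bp.gi j = fun n => decide (di j = dp.regs j n)) ∧
  (∀ j, bp.go j = fun n => decide (dout j = dp.regs j n)) ∧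
  (∀ j, bp.asgn j = dp.asgn j)

section Registers

variable {R D : Type}

def updateRegs (r : R → D) (a : R → Bool) (x : D) : R → D :=
  fun n => if a n then x else r n

theorem ker_const_eq_top (d : D) : Setoid.ker (fun _ : R => d) = ⊤ :=
  Setoid.ext fun _ _ => iff_of_true rfl trivial

theorem VTrans.right_unique {pa pa₁ pa₂ : Setoid R} {gi go₁ go₂ a : R → Bool}
    (h₁ : VTrans pa pa₁ gi go₁ a) (h₂ : VTrans pa pa₂ gi go₂ a) : pa₁ = pa₂ :=
  Setoid.ext fun m n => (h₁.2.2 m n).trans (h₂.2.2 m n).symm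

theorem exists_eq_iff_of_respects_ker [Infinite D] [Finite R] (r : R → D) (g : R → Bool)
    (hblock : ∀ m n, r m = r n → g m = g n)
    (hsingle : ∀ m n, r m ≠ r n → ¬(g m = true ∧ g n = true)) :
    ∃ x, ∀ n, x = r n ↔ g n = true := by
  by_cases hg : ∃ m, g m = true
  · obtain ⟨m, hm⟩ := hg
    refine ⟨r m, fun n => ⟨fun h => hblock m n h ▸ hm, fun hn => ?_⟩⟩
    by_contra h
    exact hsingle m n h ⟨hm, hn⟩
  · simp only [not_exists, Bool.not_eq_true] at hg
    obtain ⟨x, hx⟩ := (Set.finite_range r).infinite_compl.nonempty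
    exact ⟨x, fun n => iff_of_false (fun h => hx ⟨n, h.symm⟩) (by simp [hg n])⟩

/-- A data value whose equality pattern with the registers `r` is the guard `g`, if there is one. -/
noncomputable def guardWitness [Infinite D] (g : R → Bool) (r : R → D) : D :=
  Classical.epsilon fun x => ∀ n, x = r n ↔ g n = true

variable [DecidableEq D]

theorem vTrans_ker_updateRegs (r : R → D) (a : R → Bool) (x y : D) :
    VTrans (Setoid.ker r) (Setoid.ker (updateRegs r a x))
      (fun n => decide (x = r n)) (fun n => decide (y = r n)) a := by
  refine ⟨fun m n (h : r m = r n) => by simp only [h, and_self], ?_, ?_⟩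
  · intro m n (h : r m ≠ r n)
    simp only [decide_eq_true_iff]
    exact ⟨fun ⟨hm, hn⟩ => h (hm ▸ hn), fun ⟨hm, hn⟩ => h (hm ▸ hn)⟩
  · intro m n
    change updateRegs r a x m = updateRegs r a x n ↔ _
    unfold updateRegs
    cases a m <;> cases a n <;> simp [eq_comm, Setoid.ker_def]

theorem eq_decide_guardWitness [Infinite D] [Finite R] {r : R → D} {g : R → Bool}
    (hblock : ∀ m n, r m = r n → g m = g n)
    (hsingle : ∀ m n, r m ≠ r n → ¬(g m = true ∧ g n = true)) :
    g = fun n => decide (guardWitness g r = r n) := by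
  have hw := Classical.epsilon_spec (exists_eq_iff_of_respects_ker r g hblock hsingle)
  funext n
  simp only [guardWitness, hw n, Bool.decide_eq_true]

theorem eq_decide_guardWitness_of_vTrans [Infinite D] [Finite R] {r : R → D} {pa' : Setoid R}
    {gi go a : R → Bool} (h : VTrans (Setoid.ker r) pa' gi go a) :
    gi = (fun n => decide (guardWitness gi r = r n)) ∧
      go = (fun n => decide (guardWitness go r = r n)) :=
  ⟨eq_decide_guardWitness (fun m n hmn => (h.1 m n hmn).1) (fun m n hmn => (h.2.1 m n hmn).1),
    eq_decide_guardWitness (fun m n hmn => (h.1 m n hmn).2) (fun m n hmn => (h.2.1 m n hmn).2)⟩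

end Registers

namespace DataPath

variable {P D Q R : Type} [DecidableEq D] {A : RegAutomaton P D Q R}
  {l : ℕ → P → Bool} {di dout : ℕ → D}

theorem regs_succ (dp : DataPath A l di dout) (j : ℕ) :
    dp.regs (j + 1) = updateRegs (dp.regs j) (dp.asgn j) (di j) :=
  funext (dp.update j)

def toBoolPathV (dp : DataPath A l di dout) : BoolPathV A where
  st := dp.st
  part j := Setoid.ker (dp.regs j)
  lP := l
  gi j n := decide (di j = dp.regs j n)
  go j n := decide (dout j = dp.regs j n)
  asgn := dp.asgn
  init_st := dp.init_st
  init_part := by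
    rw [show dp.regs 0 = fun _ => A.d0 from funext dp.init_regs, ker_const_eq_top]
  stepA := dp.step
  stepV j := by
    rw [dp.regs_succ]
    exact vTrans_ker_updateRegs _ _ _ _

theorem correspondsV_toBoolPathV (dp : DataPath A l di dout) : CorrespondsV dp dp.toBoolPathV :=
  ⟨fun _ => rfl, fun _ => rfl, fun _ => rfl, fun _ => rfl, fun _ => rfl⟩

end DataPath

namespace BoolPathV

variable {P D Q R : Type} [Infinite D] [DecidableEq D] [Finite R] {A : RegAutomaton P D Q R}

noncomputable def regs (bp : BoolPathV A) : ℕ → R → D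
  | 0 => fun _ => A.d0
  | j + 1 => updateRegs (bp.regs j) (bp.asgn j) (guardWitness (bp.gi j) (bp.regs j))

noncomputable def di (bp : BoolPathV A) (j : ℕ) : D := guardWitness (bp.gi j) (bp.regs j)

noncomputable def dout (bp : BoolPathV A) (j : ℕ) : D := guardWitness (bp.go j) (bp.regs j)

theorem part_eq_ker_regs (bp : BoolPathV A) (j : ℕ) : bp.part j = Setoid.ker (bp.regs j) := by
  induction j with
  | zero => exact bp.init_part.trans (ker_const_eq_top A.d0).symm
  | succ j ih =>
    have hv := bp.stepV j
    rw [ih] at hv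
    rw [(eq_decide_guardWitness_of_vTrans hv).1] at hv
    exact hv.right_unique (vTrans_ker_updateRegs _ _ _ (bp.dout j))

theorem gi_eq (bp : BoolPathV A) (j : ℕ) : bp.gi j = fun n => decide (bp.di j = bp.regs j n) :=
  (eq_decide_guardWitness_of_vTrans (bp.part_eq_ker_regs j ▸ bp.stepV j)).1

theorem go_eq (bp : BoolPathV A) (j : ℕ) : bp.go j = fun n => decide (bp.dout j = bp.regs j n) :=
  (eq_decide_guardWitness_of_vTrans (bp.part_eq_ker_regs j ▸ bp.stepV j)).2

noncomputable def toDataPath (bp : BoolPathV A) : DataPath A bp.lP bp.di bp.dout where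
  st := bp.st
  regs := bp.regs
  asgn := bp.asgn
  init_st := bp.init_st
  init_regs _ := rfl
  step j := bp.gi_eq j ▸ bp.go_eq j ▸ bp.stepA j
  update _ _ := rfl

theorem correspondsV_toDataPath (bp : BoolPathV A) : CorrespondsV bp.toDataPath bp :=
  ⟨fun _ => rfl, fun _ => rfl, bp.gi_eq, bp.go_eq, fun _ => rfl⟩

end BoolPathV

theorem stmt5 (D : Type) [Infinite D] [DecidableEq D] (P Q : Type)
    (k : ℕ) (A : RegAutomaton P D Q (Fin k)) :
    (∃ bp : BoolPathV A, ∀ N, ∃ j, N ≤ j ∧ bp.st j ∈ A.F) ↔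
    (∃ (l : ℕ → P → Bool) (di dout : ℕ → D) (dp : DataPath A l di dout),
      ∀ N, ∃ j, N ≤ j ∧ dp.st j ∈ A.F) := by
  constructor
  · rintro ⟨bp, hF⟩
    have hst := bp.correspondsV_toDataPath.1
    exact ⟨_, _, _, bp.toDataPath, fun N => by simpa only [hst] using hF N⟩
  · rintro ⟨l, di, dout, dp, hF⟩
    have hst := dp.correspondsV_toBoolPathV.1
    exact ⟨dp.toBoolPathV, fun N => by simpa only [hst] using hF N⟩
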